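/- arXiv:2210.07491 — 4 statements merged into one kernel-verified Lean document; each statement's English description precedes it below -/
import Mathlib

section
/- Let W be a real n×q matrix, let b_1, …, b_m ∈ ℝ^q, and let 𝐁 be the m×q matrix whose k-th row is b_kᵀ. Suppose ‖W b_k‖_2 ≤ γ for all k = 1, …, m and λ_max(𝐁ᵀ𝐁) ≤ C_B m / q for a constant C_B > 0. Then the q×(nm) block matrix M = ( b_1 b_1ᵀ Wᵀ b_2 b_2ᵀ Wᵀ ⋯ b_m b_mᵀ Wᵀ ), formed by horizontally concatenating the q×n blocks b_k b_kᵀ Wᵀ, satisfies ‖M‖_2 ≤ γ (C_B m / q)^{1/2}. -/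
open scoped BigOperators
open MeasureTheory Matrix

/-- Spectral norm (largest singular value) of a real matrix. -/
noncomputable def specNorm {a b : Type*} [Fintype a] [Fintype b] [DecidableEq b]
    (M : Matrix a b ℝ) : ℝ :=
  ‖LinearMap.toContinuousLinearMap (Matrix.toEuclideanLin M)‖

noncomputable def vnorm {a : Type*} [Fintype a] (v : a → ℝ) : ℝ :=
  Real.sqrt (∑ i, (v i) ^ 2)

/-- Largest eigenvalue of a symmetric matrix, via the Rayleigh quotient. -/
noncomputable def eigMax {a : Type*} [Fintype a] (M : Matrix a a ℝ) : ℝ :=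
  sSup {r | ∃ v : a → ℝ, (∑ i, (v i) ^ 2) = 1 ∧ r = ∑ i, v i * M.mulVec v i}

/-- The design matrix whose `k`-th row is `b k`. -/
noncomputable def designMat {m q : ℕ} (b : Fin m → Fin q → ℝ) :
    Matrix (Fin m) (Fin q) ℝ := Matrix.of fun k j => b k j

/-!
Writing `v = (v_1, …, v_m)` in blocks, `M v = 𝐁ᵀ c` with `c_k = ⟪W b_k, v_k⟫`. Blockwise
Cauchy–Schwarz gives `‖c‖ ≤ γ ‖v‖`. With `u = 𝐁ᵀ c` and the Rayleigh bound
`‖𝐁 u‖² ≤ λ_max(𝐁ᵀ𝐁) ‖u‖²`, we get `‖u‖² = ⟪𝐁 u, c⟫ ≤ λ_max^{1/2} ‖u‖ ‖c‖`, so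
`‖𝐁ᵀ c‖² ≤ λ_max(𝐁ᵀ𝐁) ‖c‖²`.
-/

section

variable {ι α : Type*} [Fintype ι] [Fintype α]

lemma specNorm_le_of_sum_sq_le [DecidableEq α] (M : Matrix ι α ℝ) {C : ℝ} (hC : 0 ≤ C)
    (h : ∀ v : α → ℝ, ∑ i, (M *ᵥ v) i ^ 2 ≤ C ^ 2 * ∑ j, v j ^ 2) : specNorm M ≤ C := by
  refine ContinuousLinearMap.opNorm_le_bound _ hC fun x => ?_
  simp only [LinearMap.coe_toContinuousLinearMap', EuclideanSpace.norm_eq, Real.norm_eq_abs,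
    sq_abs]
  calc √(∑ i, (M *ᵥ x.ofLp) i ^ 2) ≤ √(C ^ 2 * ∑ j, x j ^ 2) := Real.sqrt_le_sqrt (h x.ofLp)
    _ = C * √(∑ j, x j ^ 2) := by rw [Real.sqrt_mul (sq_nonneg C), Real.sqrt_sq hC]

lemma sum_sq_mulVec_eq_dotProduct_gram_mulVec (B : Matrix ι α ℝ) (u : α → ℝ) :
    ∑ k, (B *ᵥ u) k ^ 2 = u ⬝ᵥ ((Bᵀ * B) *ᵥ u) := by
  rw [← mulVec_mulVec, dotProduct_mulVec, vecMul_transpose]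
  simp only [dotProduct, sq]

lemma sum_sq_smul (c : ℝ) (v : α → ℝ) : ∑ i, (c • v) i ^ 2 = c ^ 2 * ∑ i, v i ^ 2 := by
  simp only [Pi.smul_apply, smul_eq_mul, mul_pow, Finset.mul_sum]

lemma eigMax_gram_nonneg (B : Matrix ι α ℝ) : 0 ≤ eigMax (Bᵀ * B) := by
  refine Real.sSup_nonneg ?_
  rintro _ ⟨v, -, rfl⟩
  change 0 ≤ v ⬝ᵥ ((Bᵀ * B) *ᵥ v)
  rw [← sum_sq_mulVec_eq_dotProduct_gram_mulVec]
  positivity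

lemma bddAbove_rayleigh_gram (B : Matrix ι α ℝ) :
    BddAbove {r | ∃ v : α → ℝ, (∑ i, (v i) ^ 2) = 1 ∧ r = ∑ i, v i * (Bᵀ * B).mulVec v i} := by
  refine ⟨∑ k, ∑ j, B k j ^ 2, ?_⟩
  rintro _ ⟨v, hv, rfl⟩
  change v ⬝ᵥ ((Bᵀ * B) *ᵥ v) ≤ _
  rw [← sum_sq_mulVec_eq_dotProduct_gram_mulVec]
  refine Finset.sum_le_sum fun k _ => ?_
  simpa [hv, mulVec, dotProduct] using Finset.sum_mul_sq_le_sq_mul_sq Finset.univ (B k) v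

lemma sum_sq_mulVec_le_eigMax_mul (B : Matrix ι α ℝ) (u : α → ℝ) :
    ∑ k, (B *ᵥ u) k ^ 2 ≤ eigMax (Bᵀ * B) * ∑ i, u i ^ 2 := by
  set s := ∑ i, u i ^ 2
  rcases (Finset.sum_nonneg fun i _ => sq_nonneg (u i) : 0 ≤ s).eq_or_lt with hs | hs
  · have hu : u = 0 := by
      ext i
      simpa using
        congrFun ((Fintype.sum_eq_zero_iff_of_nonneg fun i => sq_nonneg (u i)).1 hs.symm) i
    simp [s, hu]
  have hunit : ∑ i, ((√s)⁻¹ • u) i ^ 2 = 1 := by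
    rw [sum_sq_smul, inv_pow, Real.sq_sqrt hs.le, inv_mul_cancel₀ hs.ne']
  have hray := le_csSup (bddAbove_rayleigh_gram B) ⟨_, hunit, rfl⟩
  change (√s)⁻¹ • u ⬝ᵥ ((Bᵀ * B) *ᵥ ((√s)⁻¹ • u)) ≤ _ at hray
  rw [← sum_sq_mulVec_eq_dotProduct_gram_mulVec, mulVec_smul, sum_sq_smul, inv_pow,
    Real.sq_sqrt hs.le, inv_mul_le_iff₀ hs] at hray
  exact hray.trans_eq (mul_comm _ _)

lemma sum_sq_transpose_mulVec_le_eigMax_mul (B : Matrix ι α ℝ) (c : ι → ℝ) :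
    ∑ i, (Bᵀ *ᵥ c) i ^ 2 ≤ eigMax (Bᵀ * B) * ∑ k, c k ^ 2 := by
  set u := Bᵀ *ᵥ c
  have hS : ∑ i, u i ^ 2 = ∑ k, (B *ᵥ u) k * c k := by
    simp only [sq]
    change u ⬝ᵥ u = (B *ᵥ u) ⬝ᵥ c
    rw [← vecMul_transpose, ← dotProduct_mulVec]
  have hCS := Finset.sum_mul_sq_le_sq_mul_sq Finset.univ (B *ᵥ u) c
  have hray := sum_sq_mulVec_le_eigMax_mul B u
  rw [← hS] at hCS
  have hlam := eigMax_gram_nonneg B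
  have hS0 : 0 ≤ ∑ i, u i ^ 2 := by positivity
  have hc0 : 0 ≤ ∑ k, c k ^ 2 := by positivity
  nlinarith [mul_le_mul_of_nonneg_right hray hc0, mul_nonneg hlam hc0]

end

section

variable {ι κ α : Type*} [Fintype ι] [Fintype κ]

lemma mulVec_of_blockRow (b : ι → α → ℝ) (a : ι → κ → ℝ) (v : ι × κ → ℝ) :
    (of fun (i : α) (p : ι × κ) => b p.1 i * a p.1 p.2) *ᵥ v =
      (of b)ᵀ *ᵥ fun k => a k ⬝ᵥ fun j => v (k, j) := by
  ext i
  simp only [mulVec, dotProduct, of_apply, transpose_apply, Fintype.sum_prod_type,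
    Finset.mul_sum, mul_assoc]

lemma sum_sq_dotProduct_le (a : ι → κ → ℝ) {γ : ℝ} (ha : ∀ k, ∑ j, a k j ^ 2 ≤ γ ^ 2)
    (v : ι × κ → ℝ) :
    ∑ k, (a k ⬝ᵥ fun j => v (k, j)) ^ 2 ≤ γ ^ 2 * ∑ p, v p ^ 2 := by
  rw [Fintype.sum_prod_type, Finset.mul_sum]
  refine Finset.sum_le_sum fun k _ => ?_
  exact (Finset.sum_mul_sq_le_sq_mul_sq _ _ _).trans
    (mul_le_mul_of_nonneg_right (ha k) (by positivity))

end

theorem stmt2_general {n q m : ℕ} (hm : 0 < m)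
    (γ CB : ℝ)
    (W : Matrix (Fin n) (Fin q) ℝ) (b : Fin m → Fin q → ℝ)
    (hW : ∀ k, vnorm (W.mulVec (b k)) ≤ γ)
    (hB : eigMax ((designMat b)ᵀ * designMat b) ≤ CB * m / q) :
    specNorm (Matrix.of fun (i : Fin q) (p : Fin m × Fin n) =>
        b p.1 i * (W.mulVec (b p.1)) p.2)
      ≤ γ * Real.sqrt (CB * m / q) := by
  have hWb k := Real.sqrt_le_iff.1 (hW k)
  have hγ : 0 ≤ γ := (hWb ⟨0, hm⟩).1
  have hlam : 0 ≤ CB * m / q := (eigMax_gram_nonneg _).trans hB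
  refine specNorm_le_of_sum_sq_le _ (by positivity) fun v => ?_
  rw [mulVec_of_blockRow b fun k => W *ᵥ b k]
  calc _ ≤ eigMax ((designMat b)ᵀ * designMat b) * _ :=
        sum_sq_transpose_mulVec_le_eigMax_mul _ _
    _ ≤ CB * m / q * (γ ^ 2 * ∑ p, v p ^ 2) :=
        mul_le_mul hB (sum_sq_dotProduct_le _ (fun k => (hWb k).2) v) (by positivity) hlam
    _ = (γ * √(CB * m / q)) ^ 2 * ∑ p, v p ^ 2 := by rw [mul_pow, Real.sq_sqrt hlam]; ring

/-- **Lemma 2.** If `‖Wb_k‖₂ ≤ γ` for all `k` and `λ_max(𝐁ᵀ𝐁) ≤ C_B m/q`, then the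
`q×(nm)` block matrix `(b_1b_1ᵀWᵀ ⋯ b_mb_mᵀWᵀ)` has spectral norm at most
`γ(C_B m/q)^{1/2}`. -/
theorem stmt2 {n q m : ℕ} (hn : 0 < n) (hq : 0 < q) (hm : 0 < m)
    (γ CB : ℝ) (hCB : 0 < CB)
    (W : Matrix (Fin n) (Fin q) ℝ) (b : Fin m → Fin q → ℝ)
    (hW : ∀ k, vnorm (W.mulVec (b k)) ≤ γ)
    (hB : eigMax ((designMat b)ᵀ * designMat b) ≤ CB * m / q) :
    specNorm (Matrix.of fun (i : Fin q) (p : Fin m × Fin n) =>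
        b p.1 i * (W.mulVec (b p.1)) p.2)
      ≤ γ * Real.sqrt (CB * m / q) :=
  stmt2_general hm γ CB W b hW hB
end

section
/- Let x, y, z ∈ ℝ^n be vectors with xᵀz > 0. If min_{s ∈ {−1,1}} ‖s x − y‖_2 + ‖y − z‖_2 < ‖x‖_2, then xᵀy > 0. -/
/-! If `⟪x, y⟫ ≤ 0`, then `x - y` is at least as long as `x`, so the sign `s = 1` cannot achieve
the minimum; for `s = -1`, the triangle inequality gives `‖-x - y‖ + ‖y - z‖ ≥ ‖x + z‖`, and
`⟪x, z⟫ > 0` makes `x + z` strictly longer than `x`. -/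

lemma norm_add_le_norm_neg_sub_add_norm_sub {E : Type*} [SeminormedAddCommGroup E] (x y z : E) :
    ‖x + z‖ ≤ ‖-x - y‖ + ‖y - z‖ :=
  calc ‖x + z‖ = ‖(-x - y) + (y - z)‖ := by rw [← norm_neg]; congr 1; abel
    _ ≤ ‖-x - y‖ + ‖y - z‖ := norm_add_le _ _

section

variable {F : Type*} [NormedAddCommGroup F] [InnerProductSpace ℝ F]

lemma norm_le_norm_sub_of_inner_nonpos {x y : F} (h : inner ℝ x y ≤ 0) : ‖x‖ ≤ ‖x - y‖ := by
  rw [← sq_le_sq₀ (norm_nonneg _) (norm_nonneg _), norm_sub_sq_real]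
  nlinarith [sq_nonneg ‖y‖]

lemma norm_lt_norm_add_of_inner_pos {x z : F} (h : 0 < inner ℝ x z) : ‖x‖ < ‖x + z‖ := by
  rw [← sq_lt_sq₀ (norm_nonneg _) (norm_nonneg _), norm_add_sq_real]
  nlinarith [sq_nonneg ‖z‖]

end

/-- **Lemma 3.** If `xᵀz > 0` and `min_{s∈{−1,1}} ‖sx − y‖ + ‖y − z‖ < ‖x‖`, then `xᵀy > 0`. -/
theorem stmt3 {n : ℕ} (x y z : EuclideanSpace ℝ (Fin n))
    (hxz : 0 < (inner ℝ x z : ℝ))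
    (h : min ‖x - y‖ ‖(-x) - y‖ + ‖y - z‖ < ‖x‖) :
    0 < (inner ℝ x y : ℝ) := by
  by_contra! hxy
  have h_pos : ‖x‖ ≤ ‖x - y‖ := norm_le_norm_sub_of_inner_nonpos hxy
  have h_neg : ‖x‖ < ‖-x - y‖ + ‖y - z‖ :=
    (norm_lt_norm_add_of_inner_pos hxz).trans_le (norm_add_le_norm_neg_sub_add_norm_sub x y z)
  rcases min_cases ‖x - y‖ ‖-x - y‖ with ⟨hmin, _⟩ | ⟨hmin, _⟩ <;> rw [hmin] at h
  · linarith [norm_nonneg (y - z)]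
  · linarith
end

section
/- Let P be a symmetric real n×n matrix of rank at most d, let E be a symmetric real n×n matrix, and let T be a best rank-at-most-d approximation of P + E in spectral norm (i.e., rank T ≤ d and ‖(P+E) − T‖_2 ≤ ‖(P+E) − M‖_2 for every matrix M of rank at most d). Then ‖T − P‖_F ≤ 2 √(2d) ‖E‖_2. -/
/-!
Testing the best approximation `T` against the competitor `P` gives `‖(P + E) - T‖₂ ≤ ‖E‖₂`,
hence `‖T - P‖₂ ≤ 2‖E‖₂` by the triangle inequality. Moreover `rank (T - P) ≤ 2d`, and for any
matrix `A` the square `‖A‖_F² = tr (Aᴴ A)` is a sum of `rank A` nonzero eigenvalues of `Aᴴ A`,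
each at most `‖Aᴴ A‖₂ = ‖A‖₂²`; so `‖A‖_F ≤ √(rank A) ‖A‖₂`.
-/

open scoped BigOperators
open MeasureTheory Matrix

noncomputable def frobSq {a b : Type*} [Fintype a] [Fintype b]
    (M : Matrix a b ℝ) : ℝ := ∑ i, ∑ j, (M i j) ^ 2

noncomputable def frobNorm {a b : Type*} [Fintype a] [Fintype b]
    (M : Matrix a b ℝ) : ℝ := Real.sqrt (frobSq M)

open scoped Matrix.Norms.L2Operator

namespace Matrix

variable {m n : Type*} [Fintype n]

theorem rank_add_le {K : Type*} [Field K] (A B : Matrix m n K) :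
    (A + B).rank ≤ A.rank + B.rank := by
  rw [rank, rank, rank, mulVecLin_add]
  exact (Submodule.finrank_mono (LinearMap.range_add_le _ _)).trans
    (Submodule.finrank_add_le_finrank_add_finrank _ _)

theorem rank_sub_le {K : Type*} [Field K] (A B : Matrix m n K) :
    (A - B).rank ≤ A.rank + B.rank := by
  have hneg : (-B).rank = B.rank := by
    have : (-B).mulVecLin = -B.mulVecLin := LinearMap.ext fun v => neg_mulVec v B
    rw [rank, rank, this, LinearMap.range_neg]
  simpa [sub_eq_add_neg, hneg] using rank_add_le A (-B)

theorem IsHermitian.abs_eigenvalues_le_l2_opNorm [DecidableEq n] {A : Matrix n n ℝ}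
    (hA : A.IsHermitian) (i : n) : |hA.eigenvalues i| ≤ ‖A‖ := by
  have : Nonempty n := ⟨i⟩
  simpa using spectrum.norm_le_norm_of_mem (hA.eigenvalues_mem_spectrum_real i)

end Matrix

section FrobeniusNorm

variable {m n : Type*} [Fintype m] [Fintype n]

theorem specNorm_eq_l2_opNorm [DecidableEq n] (A : Matrix m n ℝ) : specNorm A = ‖A‖ := rfl

theorem frobSq_eq_trace_conjTranspose_mul_self (A : Matrix m n ℝ) :
    frobSq A = (Aᴴ * A).trace := by
  simp only [frobSq, trace, diag, mul_apply, conjTranspose_apply, star_trivial, sq]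
  exact Finset.sum_comm

theorem frobSq_le_rank_mul_l2_opNorm_sq [DecidableEq n] (A : Matrix m n ℝ) :
    frobSq A ≤ A.rank * ‖A‖ ^ 2 := by
  have hH := (posSemidef_conjTranspose_mul_self A).isHermitian
  set μ := hH.eigenvalues
  have hcard : (Finset.univ.filter fun i => μ i ≠ 0).card = A.rank := by
    rw [← rank_conjTranspose_mul_self A, hH.rank_eq_card_non_zero_eigs, Fintype.card_subtype]
  have hμ (i : n) : μ i ≤ ‖A‖ ^ 2 :=
    calc μ i ≤ |μ i| := le_abs_self _
      _ ≤ ‖Aᴴ * A‖ := hH.abs_eigenvalues_le_l2_opNorm i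
      _ = ‖A‖ ^ 2 := by rw [l2_opNorm_conjTranspose_mul_self, sq]
  calc frobSq A = ∑ i ∈ Finset.univ.filter fun i => μ i ≠ 0, μ i := by
        rw [Finset.sum_filter_ne_zero, frobSq_eq_trace_conjTranspose_mul_self,
          hH.trace_eq_sum_eigenvalues]
        rfl
    _ ≤ A.rank * ‖A‖ ^ 2 := by
        rw [← hcard, ← nsmul_eq_mul]
        exact Finset.sum_le_card_nsmul _ _ _ fun i _ => hμ i

theorem frobNorm_le_sqrt_rank_mul_l2_opNorm [DecidableEq n] (A : Matrix m n ℝ) :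
    frobNorm A ≤ √A.rank * ‖A‖ := by
  rw [frobNorm, ← Real.sqrt_sq (norm_nonneg A), ← Real.sqrt_mul (Nat.cast_nonneg _)]
  exact Real.sqrt_le_sqrt (frobSq_le_rank_mul_l2_opNorm_sq A)

end FrobeniusNorm

theorem stmt11_general {n d : ℕ} (P E T : Matrix (Fin n) (Fin n) ℝ)
    (hPrank : P.rank ≤ d) (hTrank : T.rank ≤ d)
    (hbest : ∀ M : Matrix (Fin n) (Fin n) ℝ, M.rank ≤ d →
      specNorm ((P + E) - T) ≤ specNorm ((P + E) - M)) :
    frobNorm (T - P) ≤ 2 * Real.sqrt (2 * d) * specNorm E := by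
  simp only [specNorm_eq_l2_opNorm] at hbest ⊢
  have hresidual : ‖(P + E) - T‖ ≤ ‖E‖ := by simpa using hbest P hPrank
  have hspec : ‖T - P‖ ≤ 2 * ‖E‖ :=
    calc ‖T - P‖ = ‖E - ((P + E) - T)‖ := by abel_nf
      _ ≤ ‖E‖ + ‖(P + E) - T‖ := norm_sub_le _ _
      _ ≤ 2 * ‖E‖ := by linarith
  have hrank : ((T - P).rank : ℝ) ≤ 2 * d := by
    exact_mod_cast (Matrix.rank_sub_le T P).trans (by omega)
  calc frobNorm (T - P) ≤ √(T - P).rank * ‖T - P‖ := frobNorm_le_sqrt_rank_mul_l2_opNorm _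
    _ ≤ √(2 * d) * (2 * ‖E‖) := by gcongr
    _ = 2 * √(2 * d) * ‖E‖ := by ring

/-- Key intermediate estimate in Lemma 7: if `P` is symmetric of rank at most `d`, `E`
is symmetric, and `T` is a best rank-at-most-`d` spectral-norm approximation of `P + E`,
then `‖T − P‖_F ≤ 2√(2d)‖E‖₂`. -/
theorem stmt11 {n d : ℕ} (P E T : Matrix (Fin n) (Fin n) ℝ)
    (hP : P.IsSymm) (hE : E.IsSymm) (hPrank : P.rank ≤ d) (hTrank : T.rank ≤ d)
    (hbest : ∀ M : Matrix (Fin n) (Fin n) ℝ, M.rank ≤ d →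
      specNorm ((P + E) - T) ≤ specNorm ((P + E) - M)) :
    frobNorm (T - P) ≤ 2 * Real.sqrt (2 * d) * specNorm E :=
  stmt11_general P E T hPrank hTrank hbest
end

section
/- Let Z : {x_1,…,x_m} → ℝ^{n×d} with γ_Z² = min_k λ_min(Z(x_k)ᵀZ(x_k)) > 0, let b_k = B(x_k) ∈ ℝ^q with design matrix 𝐁 (rows b_kᵀ) satisfying λ_min(𝐁ᵀ𝐁) ≥ c_B m/q > 0, and let Ŵ be a real n×q×d tensor with coordinate target W* = Z* ×_2 (𝐁ᵀ𝐁)^{−1}𝐁ᵀ, where Z* ∈ 𝒯^m(Z) minimizes ‖Ŵ − Z′ ×_2 (𝐁ᵀ𝐁)^{−1}𝐁ᵀ‖_F over Z′ ∈ 𝒯^m(Z). Then ‖Ŵ − W*‖_F² ≤ ( q / (2(√2 − 1) c_B m γ_Z²) ) Σ_{k=1}^m ‖ (Ŵ ×̄_2 b_k)(Ŵ ×̄_2 b_k)ᵀ − Z(x_k)Z(x_k)ᵀ ‖_F². -/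
open scoped BigOperators
open MeasureTheory Matrix

/-- Smallest eigenvalue of a symmetric matrix, via the Rayleigh quotient. -/
noncomputable def eigMin {a : Type*} [Fintype a] (M : Matrix a a ℝ) : ℝ :=
  sInf {r | ∃ v : a → ℝ, (∑ i, (v i) ^ 2) = 1 ∧ r = ∑ i, v i * M.mulVec v i}

/-- The coordinate (least squares) map `(𝐁ᵀ𝐁)⁻¹𝐁ᵀ`. -/
noncomputable def coordMap {m q : ℕ} (b : Fin m → Fin q → ℝ) :
    Matrix (Fin q) (Fin m) ℝ := ((designMat b)ᵀ * designMat b)⁻¹ * (designMat b)ᵀ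

/-- `W ×̄₂ b`: the n×d matrix whose r-th column is `W_r b`. -/
noncomputable def bar2 {n q d : ℕ} (W : Fin d → Matrix (Fin n) (Fin q) ℝ)
    (b : Fin q → ℝ) : Matrix (Fin n) (Fin d) ℝ :=
  Matrix.of fun i r => (W r).mulVec b i

/-- `S ×₂ C`: apply the matrix `C` to each second-mode fiber of the n×m×d tensor `S`. -/
noncomputable def times2 {n m d q : ℕ} (S : Fin m → Matrix (Fin n) (Fin d) ℝ)
    (C : Matrix (Fin q) (Fin m) ℝ) : Fin d → Matrix (Fin n) (Fin q) ℝ :=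
  fun r => Matrix.of fun i j => ∑ k, C j k * S k i r

/-- Squared Frobenius norm of an n×q×d tensor given by its slices. -/
noncomputable def tFrobSq {n q d : ℕ} (W : Fin d → Matrix (Fin n) (Fin q) ℝ) : ℝ :=
  ∑ r, frobSq (W r)

/-!
Write `Yₖ = Ŵ ×̄₂ bₖ`. Choosing `Qₖ` orthogonal maximising `tr (Qₖᵀ Zₖᵀ Yₖ)` (the orthogonal
group is compact) makes `Qₖᵀ Zₖᵀ Yₖ` symmetric and positive semidefinite: otherwise a Givens
rotation, resp. a Householder reflection, would increase the trace. For such a polar alignment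
`X = Zₖ Qₖ`, `E = Yₖ - X`, expanding `‖Yₖ Yₖᵀ - X Xᵀ‖²` and using `λ_min(XᵀX) ≥ γ_Z²` gives the
Procrustes bound `2(√2 - 1) γ_Z² ‖Yₖ - Zₖ Qₖ‖² ≤ ‖Yₖ Yₖᵀ - Zₖ Zₖᵀ‖²`.

By minimality of `Z*` it suffices to bound `‖Ŵ - (Zₖ Qₖ)ₖ ×₂ C‖²`, `C = (𝐁ᵀ𝐁)⁻¹𝐁ᵀ`, fibre by fibre:
since `C 𝐁 = 1`, `w - C z = C (𝐁 w - z)`, so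
`λ_min(𝐁ᵀ𝐁) ‖w - C z‖² ≤ ‖𝐁 C (𝐁 w - z)‖² ≤ ‖𝐁 w - z‖²`, `𝐁 C` being an orthogonal projection,
and the entries of `𝐁 w` are entries of the `Yₖ`.
-/

section Rayleigh

variable {ι : Type*} [Fintype ι]

lemma abs_le_one_of_sum_sq_eq_one {v : ι → ℝ} (hv : ∑ i, v i ^ 2 = 1) (i : ι) : |v i| ≤ 1 :=
  abs_le_one_iff_mul_self_le_one.mpr <| by
    simpa [← sq, ← hv] using Finset.single_le_sum (fun j _ => sq_nonneg (v j)) (Finset.mem_univ i)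

lemma isCompact_setOf_sum_sq_eq_one : IsCompact {v : ι → ℝ | ∑ i, v i ^ 2 = 1} :=
  (isCompact_univ_pi fun _ => isCompact_Icc (a := -1) (b := 1)).of_isClosed_subset
    (isClosed_eq (by fun_prop) continuous_const)
    fun _ hv => Set.mem_univ_pi.mpr fun i => abs_le.mp (abs_le_one_of_sum_sq_eq_one hv i)

lemma eigMin_le_dotProduct_mulVec (M : Matrix ι ι ℝ) {v : ι → ℝ} (hv : ∑ i, v i ^ 2 = 1) :
    eigMin M ≤ v ⬝ᵥ M *ᵥ v := by
  refine csInf_le ?_ ⟨v, hv, rfl⟩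
  obtain ⟨c, hc⟩ := (isCompact_setOf_sum_sq_eq_one.image
    (f := fun u : ι → ℝ => u ⬝ᵥ M *ᵥ u) (by fun_prop)).bddBelow
  exact ⟨c, by rintro r ⟨u, hu, rfl⟩; exact hc ⟨u, hu, rfl⟩⟩

lemma dotProduct_self_pos {v : ι → ℝ} (hv : v ≠ 0) : 0 < v ⬝ᵥ v :=
  lt_of_le_of_ne (Fintype.sum_nonneg fun i => mul_self_nonneg (v i))
    (Ne.symm (dotProduct_self_eq_zero.not.mpr hv))

lemma mul_dotProduct_self_le_of_forall_unit {M : Matrix ι ι ℝ} {c : ℝ}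
    (h : ∀ u : ι → ℝ, u ⬝ᵥ u = 1 → c ≤ u ⬝ᵥ M *ᵥ u) (v : ι → ℝ) :
    c * (v ⬝ᵥ v) ≤ v ⬝ᵥ M *ᵥ v := by
  rcases eq_or_ne v 0 with rfl | hv
  · simp
  have hpos := dotProduct_self_pos hv
  set r := √(v ⬝ᵥ v)
  have hr : 0 < r := Real.sqrt_pos.mpr hpos
  have hr2 : r ^ 2 = v ⬝ᵥ v := Real.sq_sqrt hpos.le
  have hu := h (r⁻¹ • v) (by
    rw [smul_dotProduct, dotProduct_smul, ← hr2, smul_eq_mul, smul_eq_mul]; field_simp)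
  rw [mulVec_smul, smul_dotProduct, dotProduct_smul, smul_smul, smul_eq_mul] at hu
  rw [← hr2]
  calc c * r ^ 2 ≤ (r⁻¹ * r⁻¹ * (v ⬝ᵥ M *ᵥ v)) * r ^ 2 := by gcongr
    _ = v ⬝ᵥ M *ᵥ v := by field_simp

lemma mul_dotProduct_self_le_of_le_eigMin {M : Matrix ι ι ℝ} {c : ℝ}
    (h : c ≤ eigMin M) (v : ι → ℝ) : c * (v ⬝ᵥ v) ≤ v ⬝ᵥ M *ᵥ v :=
  mul_dotProduct_self_le_of_forall_unit (fun u hu =>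
    h.trans (eigMin_le_dotProduct_mulVec M (by simpa [dotProduct, sq] using hu))) v

lemma posSemidef_sub_smul_one_of_le_eigMin [DecidableEq ι] {M : Matrix ι ι ℝ}
    (hM : M.IsHermitian) {c : ℝ} (h : c ≤ eigMin M) :
    (M - c • 1).PosSemidef := by
  refine .of_dotProduct_mulVec_nonneg (hM.sub (by simp)) fun v => ?_
  rw [star_trivial, sub_mulVec, smul_mulVec, one_mulVec, dotProduct_sub, dotProduct_smul,
    smul_eq_mul, sub_nonneg]
  exact mul_dotProduct_self_le_of_le_eigMin h v

end Rayleigh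

lemma eq_zero_of_forall_sub_one_mul_add_mul_nonpos {A B : ℝ}
    (h : ∀ c s : ℝ, c ^ 2 + s ^ 2 = 1 → (c - 1) * A + s * B ≤ 0) : B = 0 := by
  set r := √(A ^ 2 + B ^ 2)
  have hr2 : r ^ 2 = A ^ 2 + B ^ 2 := Real.sq_sqrt (by positivity)
  have hr0 : 0 ≤ r := Real.sqrt_nonneg _
  rcases hr0.eq_or_lt with hr | hr
  · nlinarith
  have hcs : (A / r) ^ 2 + (B / r) ^ 2 = 1 := by field_simp; linarith
  have hle := h _ _ hcs
  have hrA : r ≤ A := by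
    have : (A / r - 1) * A + B / r * B = r - A := by field_simp; linarith
    linarith
  nlinarith

section Orthogonal

variable {ι : Type*} [Fintype ι] [DecidableEq ι]

lemma isCompact_setOf_transpose_mul_self_eq_one :
    IsCompact {Q : Matrix ι ι ℝ | Qᵀ * Q = 1} := by
  refine (isCompact_univ_pi fun _ => isCompact_univ_pi fun _ =>
    isCompact_Icc (a := -1) (b := 1)).of_isClosed_subset
    (isClosed_eq (by fun_prop) continuous_const) fun (Q : Matrix ι ι ℝ) hQ => ?_
  refine Set.mem_univ_pi.mpr fun k => Set.mem_univ_pi.mpr fun l => abs_le.mp ?_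
  refine abs_le_one_of_sum_sq_eq_one (v := fun k => Q k l) ?_ k
  have h := congr_fun₂ (hQ : Qᵀ * Q = 1) l l
  rw [mul_apply] at h
  simpa [sq] using h

lemma exists_transpose_mul_self_eq_one_forall_trace_le (M : Matrix ι ι ℝ) :
    ∃ Q : Matrix ι ι ℝ, Qᵀ * Q = 1 ∧
      ∀ O : Matrix ι ι ℝ, Oᵀ * O = 1 → (Oᵀ * M).trace ≤ (Qᵀ * M).trace := by
  obtain ⟨Q, hQ, hmax⟩ := isCompact_setOf_transpose_mul_self_eq_one.exists_isMaxOn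
    ⟨1, by simp⟩ (f := fun Q : Matrix ι ι ℝ => (Qᵀ * M).trace) (by fun_prop)
  exact ⟨Q, hQ, fun O hO => hmax hO⟩

def householder (v : ι → ℝ) : Matrix ι ι ℝ := 1 - (2 : ℝ) • vecMulVec v v

lemma householder_transpose_mul_self {v : ι → ℝ} (hv : v ⬝ᵥ v = 1) :
    (householder v)ᵀ * householder v = 1 := by
  have hvv : vecMulVec v v * vecMulVec v v = vecMulVec v v := by
    rw [vecMulVec_mul_vecMulVec, hv, one_smul]
  simp only [householder, transpose_sub, transpose_one, transpose_smul, transpose_vecMulVec,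
    sub_mul, mul_sub, one_mul, mul_one, Matrix.smul_mul, Matrix.mul_smul, smul_smul, hvv]
  module

lemma trace_householder_transpose_mul (v : ι → ℝ) (N : Matrix ι ι ℝ) :
    ((householder v)ᵀ * N).trace = N.trace - 2 * (v ⬝ᵥ N *ᵥ v) := by
  simp [householder, transpose_sub, transpose_vecMulVec, sub_mul, trace_sub, vecMulVec_mul,
    trace_vecMulVec, dotProduct_mulVec, dotProduct_comm]

def givens (i j : ι) (c s : ℝ) : Matrix ι ι ℝ :=
  1 + (c - 1) • (single i i 1 + single j j 1) + s • (single j i 1 - single i j 1)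

lemma givens_transpose_mul_self {i j : ι} (hij : i ≠ j) {c s : ℝ} (hcs : c ^ 2 + s ^ 2 = 1) :
    (givens i j c s)ᵀ * givens i j c s = 1 := by
  simp only [givens, transpose_add, transpose_one, transpose_smul, transpose_sub, transpose_single,
    add_mul, mul_add, sub_mul, mul_sub, one_mul, mul_one, Matrix.smul_mul, Matrix.mul_smul,
    single_mul_single_same, single_mul_single_of_ne _ _ _ _ hij,
    single_mul_single_of_ne _ _ _ _ hij.symm]
  linear_combination (norm := module) hcs • (single i i 1 + single j j 1 : Matrix ι ι ℝ)

lemma trace_givens_transpose_mul (i j : ι) (c s : ℝ) (N : Matrix ι ι ℝ) :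
    ((givens i j c s)ᵀ * N).trace = N.trace + (c - 1) * (N i i + N j j) + s * (N j i - N i j) := by
  simp [givens, transpose_add, transpose_sub, transpose_single, add_mul, sub_mul, trace_add,
    trace_sub, trace_single_mul]
  ring

lemma posSemidef_of_forall_trace_transpose_mul_le {N : Matrix ι ι ℝ}
    (h : ∀ O : Matrix ι ι ℝ, Oᵀ * O = 1 → (Oᵀ * N).trace ≤ N.trace) : N.PosSemidef := by
  have hsymm : N.IsSymm := IsSymm.ext fun a b => by
    rcases eq_or_ne a b with rfl | hab
    · rfl
    have hB := eq_zero_of_forall_sub_one_mul_add_mul_nonpos (A := N a a + N b b)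
      (B := N b a - N a b) fun c s hcs => by
      have := h _ (givens_transpose_mul_self hab hcs)
      rw [trace_givens_transpose_mul] at this
      linarith
    linarith
  refine .of_dotProduct_mulVec_nonneg (isHermitian_iff_isSymm.mpr hsymm) fun v => ?_
  have := mul_dotProduct_self_le_of_forall_unit (c := 0) (M := N) (fun u hu => by
    have := h _ (householder_transpose_mul_self hu)
    rw [trace_householder_transpose_mul] at this
    linarith) v
  simpa using this

lemma exists_transpose_mul_self_eq_one_posSemidef (M : Matrix ι ι ℝ) :
    ∃ Q : Matrix ι ι ℝ, Qᵀ * Q = 1 ∧ (Qᵀ * M).PosSemidef := by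
  obtain ⟨Q, hQ, hmax⟩ := exists_transpose_mul_self_eq_one_forall_trace_le M
  refine ⟨Q, hQ, posSemidef_of_forall_trace_transpose_mul_le fun O hO => ?_⟩
  have hQO : (Q * O)ᵀ * (Q * O) = 1 := by
    rw [transpose_mul, Matrix.mul_assoc, ← Matrix.mul_assoc Qᵀ, hQ, Matrix.one_mul, hO]
  simpa [transpose_mul, Matrix.mul_assoc] using hmax _ hQO

end Orthogonal

section Frobenius
variable {κ ι : Type*} [Fintype κ] [Fintype ι]

lemma frobSq_eq_trace (M : Matrix κ ι ℝ) : frobSq M = (Mᵀ * M).trace := by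
  simp only [frobSq, trace, diag, mul_apply, transpose_apply, sq]
  exact Finset.sum_comm

lemma frobSq_nonneg (M : Matrix κ ι ℝ) : 0 ≤ frobSq M := by
  unfold frobSq; positivity

lemma sq_trace_mul_le (S : Matrix ι κ ℝ) (F : Matrix κ ι ℝ) :
    (S * F).trace ^ 2 ≤ frobSq S * frobSq F := by
  have hF : frobSq F = ∑ i, ∑ k, F k i ^ 2 := Finset.sum_comm
  have := Finset.sum_mul_sq_le_sq_mul_sq Finset.univ
    (fun p : ι × κ => S p.1 p.2) (fun p => F p.2 p.1)
  rw [hF]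
  simpa [frobSq, trace, mul_apply, Fintype.sum_prod_type] using this

lemma trace_mul_transpose_mul_self_nonneg {N : Matrix ι ι ℝ} (hN : N.PosSemidef)
    (E : Matrix κ ι ℝ) : 0 ≤ (N * (Eᵀ * E)).trace := by
  rw [← Matrix.mul_assoc, trace_mul_comm, ← Matrix.mul_assoc,
    ← conjTranspose_eq_transpose_of_trivial]
  exact (hN.mul_mul_conjTranspose_same E).trace_nonneg

end Frobenius

section Procrustes
variable {κ ι : Type*} [Fintype κ] [Fintype ι]

lemma trace_mul_transpose_mul_mul_transpose (A B C D : Matrix κ ι ℝ) :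
    (A * Bᵀ * (C * Dᵀ)).trace = (Bᵀ * C * (Dᵀ * A)).trace := by
  rw [trace_mul_cycle, Matrix.mul_assoc C, trace_mul_cycle C]

lemma frobSq_add_mul_transpose_sub (X E : Matrix κ ι ℝ) (hS : (Xᵀ * E).IsSymm) :
    frobSq ((X + E) * (X + E)ᵀ - X * Xᵀ) = 2 * (Xᵀ * X * (Eᵀ * E)).trace + 2 * frobSq (Xᵀ * E)
      + 4 * (Xᵀ * E * (Eᵀ * E)).trace + frobSq (Eᵀ * E) := by
  have hEX : Eᵀ * X = Xᵀ * E := by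
    rw [← transpose_transpose X, ← transpose_mul, transpose_transpose]; exact hS
  have hD : (X + E) * (X + E)ᵀ - X * Xᵀ = E * Xᵀ + X * Eᵀ + E * Eᵀ := by
    simp only [transpose_add, Matrix.add_mul, Matrix.mul_add]; abel
  rw [hD, frobSq_eq_trace, frobSq_eq_trace, frobSq_eq_trace, hS.eq]
  simp only [transpose_add, transpose_mul, transpose_transpose, Matrix.add_mul, Matrix.mul_add,
    trace_add,
    trace_mul_transpose_mul_mul_transpose, hEX]
  rw [trace_mul_comm (Eᵀ * E) (Xᵀ * X), trace_mul_comm (Eᵀ * E) (Xᵀ * E)]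
  ring

-- `2a + 2s + 4t + f = (2s + f + 2√2 t) + (4 - 2√2)(a + t) + (2√2 - 2)a`, and the first
-- summand is nonnegative because `2s + f ≥ 2√(2sf) ≥ 2√2 |t|`.
lemma two_mul_sqrt_two_sub_one_mul_le {a s f t e γ : ℝ} (hat : 0 ≤ a + t) (hea : γ ^ 2 * e ≤ a)
    (hts : t ^ 2 ≤ s * f) (hs : 0 ≤ s) (hf : 0 ≤ f) :
    2 * (√2 - 1) * γ ^ 2 * e ≤ 2 * a + 2 * s + 4 * t + f := by
  have h2 : √2 ^ 2 = 2 := Real.sq_sqrt zero_le_two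
  have h1 : 1 ≤ √2 := Real.one_le_sqrt.mpr one_le_two
  have hsft : 0 ≤ 2 * s + f + 2 * √2 * t := by
    rcases le_or_gt 0 t with ht | ht
    · positivity
    · nlinarith [sq_nonneg (2 * s - f)]
  nlinarith [mul_nonneg (by nlinarith : 0 ≤ 4 - 2 * √2) hat,
    mul_nonneg (by linarith : 0 ≤ 2 * √2 - 2) (sub_nonneg.mpr hea)]

variable [DecidableEq ι]

lemma procrustes_frobSq_le {X U : Matrix κ ι ℝ} {γ : ℝ} (hXU : (Xᵀ * U).PosSemidef)
    (hX : (Xᵀ * X - γ ^ 2 • 1).PosSemidef) :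
    2 * (√2 - 1) * γ ^ 2 * frobSq (U - X) ≤ frobSq (U * Uᵀ - X * Xᵀ) := by
  set E := U - X
  have hU : U = X + E := (add_sub_cancel X U).symm
  have hS : (Xᵀ * E).IsSymm := by
    rw [Matrix.mul_sub]
    refine (isHermitian_iff_isSymm.mp hXU.1).sub ?_
    rw [IsSymm, transpose_mul, transpose_transpose]
  rw [hU, frobSq_add_mul_transpose_sub X E hS]
  have hat : 0 ≤ (Xᵀ * X * (Eᵀ * E)).trace + (Xᵀ * E * (Eᵀ * E)).trace := by
    rw [← trace_add, ← Matrix.add_mul, ← Matrix.mul_add, ← hU]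
    exact trace_mul_transpose_mul_self_nonneg hXU E
  have hea : γ ^ 2 * frobSq E ≤ (Xᵀ * X * (Eᵀ * E)).trace := by
    have := trace_mul_transpose_mul_self_nonneg hX E
    rwa [Matrix.sub_mul, trace_sub, Matrix.smul_mul, Matrix.one_mul, trace_smul,
      ← frobSq_eq_trace, sub_nonneg] at this
  exact two_mul_sqrt_two_sub_one_mul_le hat hea (sq_trace_mul_le _ _) (frobSq_nonneg _)
    (frobSq_nonneg _)

lemma exists_procrustes_frobSq_le (Z Y : Matrix κ ι ℝ) {γ : ℝ}
    (hZ : (Zᵀ * Z - γ ^ 2 • 1).PosSemidef) :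
    ∃ Q : Matrix ι ι ℝ, Qᵀ * Q = 1 ∧
      2 * (√2 - 1) * γ ^ 2 * frobSq (Y - Z * Q) ≤ frobSq (Y * Yᵀ - Z * Zᵀ) := by
  obtain ⟨Q, hQ, hpsd⟩ := exists_transpose_mul_self_eq_one_posSemidef (Zᵀ * Y)
  have hXU : ((Z * Q)ᵀ * Y).PosSemidef := by rwa [transpose_mul, Matrix.mul_assoc]
  have hX : ((Z * Q)ᵀ * (Z * Q) - γ ^ 2 • 1).PosSemidef := by
    convert hZ.conjTranspose_mul_mul_same Q using 1
    simp only [conjTranspose_eq_transpose_of_trivial, transpose_mul, Matrix.mul_sub, Matrix.sub_mul,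
      Matrix.mul_smul, Matrix.smul_mul, Matrix.mul_one, hQ, Matrix.mul_assoc]
  have hXX : Z * Q * (Z * Q)ᵀ = Z * Zᵀ := by
    rw [transpose_mul, Matrix.mul_assoc, ← Matrix.mul_assoc Q, mul_eq_one_comm.mp hQ,
      Matrix.one_mul]
  exact ⟨Q, hQ, hXX ▸ procrustes_frobSq_le hXU hX⟩

end Procrustes

section LeastSquares
variable {κ ι : Type*} [Fintype κ] [Fintype ι]

lemma dotProduct_transpose_mul_self_mulVec (B : Matrix κ ι ℝ) (x : ι → ℝ) :
    x ⬝ᵥ (Bᵀ * B) *ᵥ x = (B *ᵥ x) ⬝ᵥ (B *ᵥ x) := by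
  rw [← mulVec_mulVec, dotProduct_transpose_mulVec]

lemma dotProduct_mulVec_self_le_of_isSymm_of_mul_self_eq {P : Matrix κ κ ℝ} (hP : P.IsSymm)
    (hPP : P * P = P) (y : κ → ℝ) : (P *ᵥ y) ⬝ᵥ (P *ᵥ y) ≤ y ⬝ᵥ y := by
  have hPy : (P *ᵥ y) ⬝ᵥ (P *ᵥ y) = y ⬝ᵥ P *ᵥ y := by
    rw [← dotProduct_transpose_mul_self_mulVec, hP.eq, hPP]
  have hres : 0 ≤ (y - P *ᵥ y) ⬝ᵥ (y - P *ᵥ y) :=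
    Fintype.sum_nonneg fun i => mul_self_nonneg _
  rw [sub_dotProduct, dotProduct_sub, dotProduct_sub, dotProduct_comm (P *ᵥ y) y] at hres
  linarith

variable [DecidableEq ι]

lemma mul_dotProduct_self_sub_leastSquares_le {B : Matrix κ ι ℝ} {c : ℝ} (hc : 0 < c)
    (hB : ∀ x, c * (x ⬝ᵥ x) ≤ x ⬝ᵥ (Bᵀ * B) *ᵥ x) (w : ι → ℝ) (z : κ → ℝ) :
    c * ((w - ((Bᵀ * B)⁻¹ * Bᵀ) *ᵥ z) ⬝ᵥ (w - ((Bᵀ * B)⁻¹ * Bᵀ) *ᵥ z)) ≤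
      (B *ᵥ w - z) ⬝ᵥ (B *ᵥ w - z) := by
  set C := (Bᵀ * B)⁻¹ * Bᵀ
  have hpd : (Bᵀ * B).PosDef :=
    .of_dotProduct_mulVec_pos (by simpa using isHermitian_conjTranspose_mul_self B) fun x hx =>
      star_trivial x ▸ (mul_pos hc (dotProduct_self_pos hx)).trans_le (hB x)
  have hCB : C * B = 1 := by
    rw [Matrix.mul_assoc, nonsing_inv_mul _ ((isUnit_iff_isUnit_det _).mp hpd.isUnit)]
  have hP : (B * C).IsSymm := by
    rw [IsSymm, transpose_mul, transpose_mul, transpose_nonsing_inv, transpose_mul,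
      transpose_transpose, Matrix.mul_assoc]
  have hPP : B * C * (B * C) = B * C := by
    rw [Matrix.mul_assoc, ← Matrix.mul_assoc C, hCB, Matrix.one_mul]
  have hw : w - C *ᵥ z = C *ᵥ (B *ᵥ w - z) := by
    rw [mulVec_sub, mulVec_mulVec, hCB, one_mulVec]
  calc c * ((w - C *ᵥ z) ⬝ᵥ (w - C *ᵥ z))
      ≤ (B *ᵥ (w - C *ᵥ z)) ⬝ᵥ (B *ᵥ (w - C *ᵥ z)) := by
        rw [← dotProduct_transpose_mul_self_mulVec]; exact hB _
    _ = ((B * C) *ᵥ (B *ᵥ w - z)) ⬝ᵥ ((B * C) *ᵥ (B *ᵥ w - z)) := by rw [hw, mulVec_mulVec]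
    _ ≤ (B *ᵥ w - z) ⬝ᵥ (B *ᵥ w - z) := dotProduct_mulVec_self_le_of_isSymm_of_mul_self_eq hP hPP _

end LeastSquares

lemma mul_tFrobSq_sub_times2_coordMap_le {n q d m : ℕ} (b : Fin m → Fin q → ℝ)
    (S : Fin m → Matrix (Fin n) (Fin d) ℝ) (W : Fin d → Matrix (Fin n) (Fin q) ℝ) {c : ℝ}
    (hc : 0 < c) (hB : c ≤ eigMin ((designMat b)ᵀ * designMat b)) :
    c * tFrobSq (fun r => W r - times2 S (coordMap b) r) ≤ ∑ k, frobSq (bar2 W (b k) - S k) := by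
  have hfiber : ∀ r i, c * ∑ j, ((W r - times2 S (coordMap b) r) i j) ^ 2 ≤
      ∑ k, (bar2 W (b k) i r - S k i r) ^ 2 := fun r i => by
    convert mul_dotProduct_self_sub_leastSquares_le hc (mul_dotProduct_self_le_of_le_eigMin hB)
      (fun j => W r i j) (fun k => S k i r) using 2
    · simp [dotProduct, sq, times2, coordMap, mulVec]
    · simp [dotProduct, sq, bar2, designMat, mulVec, mul_comm]
  calc c * tFrobSq (fun r => W r - times2 S (coordMap b) r)
      = ∑ r, ∑ i, c * ∑ j, ((W r - times2 S (coordMap b) r) i j) ^ 2 := by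
        simp only [tFrobSq, frobSq, Finset.mul_sum]
    _ ≤ ∑ r, ∑ i, ∑ k, (bar2 W (b k) i r - S k i r) ^ 2 := by gcongr with r _ i _; exact hfiber r i
    _ = ∑ k, frobSq (bar2 W (b k) - S k) := by
        simp only [frobSq, Matrix.sub_apply]
        rw [Finset.sum_comm]
        exact (Finset.sum_congr rfl fun _ _ => Finset.sum_comm).trans Finset.sum_comm

theorem stmt16_general {n q d m : ℕ} (hq : 0 < q) (hm : 0 < m)
    (cB γZ : ℝ) (hcB : 0 < cB) (hγ : 0 < γZ)
    (b : Fin m → Fin q → ℝ)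
    (Z : Fin m → Matrix (Fin n) (Fin d) ℝ)
    (What Wstar : Fin d → Matrix (Fin n) (Fin q) ℝ)
    (hγZ : γZ ^ 2 = ⨅ k, eigMin ((Z k)ᵀ * Z k))
    (hBmin : cB * m / q ≤ eigMin ((designMat b)ᵀ * designMat b))
    (hmin : ∀ Q' : Fin m → Matrix (Fin d) (Fin d) ℝ, (∀ k, (Q' k)ᵀ * Q' k = 1) →
      tFrobSq (fun r => What r - Wstar r) ≤
        tFrobSq (fun r => What r - times2 (fun k => Z k * Q' k) (coordMap b) r)) :
    tFrobSq (fun r => What r - Wstar r) ≤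
      (q / (2 * (Real.sqrt 2 - 1) * cB * m * γZ ^ 2)) *
        ∑ k, frobSq (bar2 What (b k) * (bar2 What (b k))ᵀ - Z k * (Z k)ᵀ) := by
  have hc : 0 < cB * m / q := by positivity
  have hκ : 0 < 2 * (√2 - 1) * γZ ^ 2 := by
    have : 0 < √2 - 1 := sub_pos.mpr Real.one_lt_sqrt_two
    positivity
  have hZ : ∀ k, ((Z k)ᵀ * Z k - γZ ^ 2 • 1).PosSemidef := fun k =>
    posSemidef_sub_smul_one_of_le_eigMin (by simpa using isHermitian_conjTranspose_mul_self (Z k))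
      (hγZ ▸ ciInf_le (Set.finite_range _).bddBelow k)
  choose Q hQ hQZ using fun k => exists_procrustes_frobSq_le (Z k) (bar2 What (b k)) (hZ k)
  have hfit := mul_tFrobSq_sub_times2_coordMap_le b (fun k => Z k * Q k) What hc hBmin
  have halign : 2 * (√2 - 1) * γZ ^ 2 * ∑ k, frobSq (bar2 What (b k) - Z k * Q k) ≤
      ∑ k, frobSq (bar2 What (b k) * (bar2 What (b k))ᵀ - Z k * (Z k)ᵀ) := by
    rw [Finset.mul_sum]
    exact Finset.sum_le_sum fun k _ => hQZ k
  calc tFrobSq (fun r => What r - Wstar r)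
      ≤ tFrobSq (fun r => What r - times2 (fun k => Z k * Q k) (coordMap b) r) := hmin Q hQ
    _ ≤ (∑ k, frobSq (bar2 What (b k) - Z k * Q k)) / (cB * m / q) :=
        (le_div_iff₀ hc).mpr (by linarith)
    _ ≤ (∑ k, frobSq (bar2 What (b k) * (bar2 What (b k))ᵀ - Z k * (Z k)ᵀ)) /
          (2 * (√2 - 1) * γZ ^ 2) / (cB * m / q) := by
        gcongr
        exact (le_div_iff₀ hκ).mpr (by linarith)
    _ = _ := by field_simp

/-- Display (tmean_lb) in the proof of Lemma 6: the coordinate-space error to the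
coordinate target is controlled by the total squared error of the fitted means. -/
theorem stmt16 {n q d m : ℕ} (hn : 0 < n) (hq : 0 < q) (hd : 0 < d) (hm : 0 < m)
    (cB γZ : ℝ) (hcB : 0 < cB) (hγ : 0 < γZ)
    (b : Fin m → Fin q → ℝ)
    (Z : Fin m → Matrix (Fin n) (Fin d) ℝ)
    (What Wstar : Fin d → Matrix (Fin n) (Fin q) ℝ)
    (Qstar : Fin m → Matrix (Fin d) (Fin d) ℝ)
    (hγZ : γZ ^ 2 = ⨅ k, eigMin ((Z k)ᵀ * Z k))
    (hBmin : cB * m / q ≤ eigMin ((designMat b)ᵀ * designMat b))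
    (hQ : ∀ k, (Qstar k)ᵀ * Qstar k = 1)
    (hWstar : Wstar = times2 (fun k => Z k * Qstar k) (coordMap b))
    (hmin : ∀ Q' : Fin m → Matrix (Fin d) (Fin d) ℝ, (∀ k, (Q' k)ᵀ * Q' k = 1) →
      tFrobSq (fun r => What r - Wstar r) ≤
        tFrobSq (fun r => What r - times2 (fun k => Z k * Q' k) (coordMap b) r)) :
    tFrobSq (fun r => What r - Wstar r) ≤
      (q / (2 * (Real.sqrt 2 - 1) * cB * m * γZ ^ 2)) *
        ∑ k, frobSq (bar2 What (b k) * (bar2 What (b k))ᵀ - Z k * (Z k)ᵀ) :=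
  stmt16_general hq hm cB γZ hcB hγ b Z What Wstar hγZ hBmin hmin
end
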